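/- Let Z : V → Z' be a Poisson variable (linear, Z Ω Z^T = 0) on a symplectic vector space V. Then Z is copyable: there exists a symplectic linear map g : V ⊕ V → V ⊕ V and an affine subspace (support of an epistemic state) R ⊆ V such that Z(g(v + x)₁) = Z(v) and Z(g(v + x)₂) = Z(v) for all v ∈ V and all x ∈ R, where subscripts denote the two V-components of the output. -/

import Mathlib

/-!
The rows of `Z` span an isotropic subspace `S`. Pairing a basis of `S` with an isotropic
family dual to it (a dual family corrected by the strictly lower triangular part of its own
Gram matrix) gives a matrix `P` with `Z P = Z` whose row space and column space are both
isotropic. The symplectic analogue of a CNOT, `G = [[1, J Pᵀ J], [P, 1]]`, then copies `Z`: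
the ancilla `x` is shifted by `P v`, so it reads `Z v` once `Z x = 0`, while the back-action
`J Pᵀ J x` on the input is invisible to `Z` because `Z J Pᵀ = Z P J Pᵀ = 0`. The ancilla
states with `Z x = 0` are the support of the epistemic state with isotropic part `S`.
-/

open Matrix

/-- The standard symplectic form matrix `[[0, 1], [-1, 0]]` on `(ι ⊕ ι) → K`. -/
def stdJ (K : Type*) [Field K] (ι : Type*) [Fintype ι] [DecidableEq ι] :
    Matrix (ι ⊕ ι) (ι ⊕ ι) K :=
  Matrix.fromBlocks 0 1 (-1) 0

namespace Matrix

lemma mul_mul_transpose_apply {R m ρ σ : Type*} [CommSemiring R] [Fintype m]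
    (A : Matrix ρ m R) (J : Matrix m m R) (B : Matrix σ m R) (i : ρ) (j : σ) :
    (A * J * Bᵀ) i j = A i ⬝ᵥ J *ᵥ B j := by
  rw [dotProduct_mulVec, mul_apply]
  rfl

lemma exists_sub_transpose_eq {R ρ : Type*} [AddGroup R] [LinearOrder ρ]
    (A : Matrix ρ ρ R) (hA : Aᵀ = -A) (hdiag : ∀ i, A i i = 0) :
    ∃ M : Matrix ρ ρ R, M - Mᵀ = A := by
  refine ⟨of fun i j => if j < i then A i j else 0, ?_⟩
  ext i j
  have hji : A j i = -A i j := congrFun (congrFun hA i) j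
  rcases lt_trichotomy i j with h | rfl | h
  · simp [h, h.not_gt, hji]
  · simp [hdiag]
  · simp [h, h.not_gt]

variable {K : Type*} [Field K]

lemma exists_mul_eq_one_of_injective {m ρ : Type*} [Fintype m] [DecidableEq m]
    [Fintype ρ] [DecidableEq ρ] {U : Matrix m ρ K} (hU : Function.Injective U.mulVec) :
    ∃ X : Matrix ρ m K, X * U = 1 := by
  obtain ⟨g, hg⟩ := U.mulVecLin.exists_leftInverse_of_injective (LinearMap.ker_eq_bot.mpr hU)
  refine ⟨LinearMap.toMatrix' g, ?_⟩
  have := congrArg LinearMap.toMatrix' hg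
  rwa [LinearMap.toMatrix'_comp, LinearMap.toMatrix'_id, ← toLin'_apply',
    LinearMap.toMatrix'_toLin'] at this

end Matrix

lemma Submodule.exists_injective_mulVec_range_eq {K m : Type*} [Field K] [Fintype m]
    (S : Submodule K (m → K)) :
    ∃ (r : ℕ) (U : Matrix m (Fin r) K),
      Function.Injective U.mulVec ∧ LinearMap.range U.mulVecLin = S := by
  set b := Module.finBasis K S
  set f := S.subtype ∘ₗ b.equivFun.symm.toLinearMap
  have hU : (LinearMap.toMatrix' f).mulVecLin = f := by
    rw [← toLin'_apply', toLin'_toMatrix']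
  refine ⟨_, LinearMap.toMatrix' f, ?_, ?_⟩
  · change Function.Injective (LinearMap.toMatrix' f).mulVecLin
    rw [hU]
    exact S.injective_subtype.comp b.equivFun.symm.injective
  · rw [hU, LinearMap.range_comp_of_range_eq_top _ (LinearEquiv.range _),
      Submodule.range_subtype]

section Symplectic

variable {K : Type*} [Field K] {ι : Type*} [Fintype ι] [DecidableEq ι]

lemma stdJ_eq_neg_J : stdJ K ι = -J ι K := by
  simp [stdJ, J, fromBlocks_neg]

lemma stdJ_transpose : (stdJ K ι)ᵀ = -stdJ K ι := by
  rw [stdJ_eq_neg_J, transpose_neg, J_transpose]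

lemma stdJ_mul_stdJ : stdJ K ι * stdJ K ι = -1 := by
  rw [stdJ_eq_neg_J, neg_mul_neg, J_squared]

lemma stdJ_mul_stdJ_mul {m : Type*} (X : Matrix (ι ⊕ ι) m K) :
    stdJ K ι * (stdJ K ι * X) = -X := by
  rw [← Matrix.mul_assoc, stdJ_mul_stdJ, Matrix.neg_mul, Matrix.one_mul]

lemma dotProduct_stdJ_mulVec_self (x : ι ⊕ ι → K) : x ⬝ᵥ stdJ K ι *ᵥ x = 0 := by
  simp [stdJ, dotProduct, mulVec, Fintype.sum_sum_type, fromBlocks, one_apply, mul_comm]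

def IsIsotropic (S : Submodule K (ι ⊕ ι → K)) : Prop :=
  ∀ x ∈ S, ∀ y ∈ S, x ⬝ᵥ stdJ K ι *ᵥ y = 0

lemma isIsotropic_span_range {κ : Type*} {Z : Matrix κ (ι ⊕ ι) K}
    (hZ : Z * stdJ K ι * Zᵀ = 0) : IsIsotropic (Submodule.span K (Set.range Z)) := by
  intro x hx y hy
  have := LinearMap.BilinMap.apply_apply_mem_of_mem_span ⊥ _ _ (toLinearMap₂' K (stdJ K ι))
    (by rintro _ ⟨i, rfl⟩ _ ⟨j, rfl⟩
        rw [toLinearMap₂'_apply', ← mul_mul_transpose_apply, hZ]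
        exact Submodule.zero_mem _) x y hx hy
  rwa [Submodule.mem_bot, toLinearMap₂'_apply'] at this

/-- `W = Xᵀ + J U M` with `X U = 1`: the correction keeps `Uᵀ W = 1` because `Uᵀ J U = 0` and
changes the Gram matrix `X J Xᵀ` by `Mᵀ - M`, so `M` is chosen with `M - Mᵀ = X J Xᵀ`. -/
lemma exists_isotropic_dual {ρ : Type*} [Fintype ρ] [LinearOrder ρ]
    {U : Matrix (ι ⊕ ι) ρ K} (hU : Function.Injective U.mulVec)
    (hUU : Uᵀ * stdJ K ι * U = 0) :
    ∃ W : Matrix (ι ⊕ ι) ρ K, Uᵀ * W = 1 ∧ Wᵀ * stdJ K ι * W = 0 := by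
  obtain ⟨X, hXU⟩ := exists_mul_eq_one_of_injective hU
  obtain ⟨M, hM⟩ := (X * stdJ K ι * Xᵀ).exists_sub_transpose_eq
    (by simp [transpose_mul, stdJ_transpose, Matrix.mul_assoc])
    (fun i => by rw [mul_mul_transpose_apply, dotProduct_stdJ_mulVec_self])
  have hUX : Uᵀ * Xᵀ = 1 := by rw [← transpose_mul, hXU, transpose_one]
  refine ⟨Xᵀ + stdJ K ι * U * M, ?_, ?_⟩
  · rw [Matrix.mul_add, hUX, ← Matrix.mul_assoc, ← Matrix.mul_assoc, hUU, Matrix.zero_mul,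
      add_zero]
  · have hXU' (N : Matrix ρ ρ K) : X * (U * N) = N := by
      rw [← Matrix.mul_assoc, hXU, Matrix.one_mul]
    have hUU' (N : Matrix ρ ρ K) : Uᵀ * (stdJ K ι * (U * N)) = 0 := by
      rw [← Matrix.mul_assoc, ← Matrix.mul_assoc, hUU, Matrix.zero_mul]
    simp only [transpose_add, transpose_mul, transpose_transpose, stdJ_transpose,
      Matrix.add_mul, Matrix.mul_add, Matrix.mul_assoc, Matrix.neg_mul, Matrix.mul_neg,
      stdJ_mul_stdJ_mul, hXU', hUU', hUX, Matrix.mul_one, Matrix.mul_zero]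
    rw [← Matrix.mul_assoc, ← hM]
    abel

theorem exists_isotropic_projection {S : Submodule K (ι ⊕ ι → K)} (hS : IsIsotropic S) :
    ∃ P : Matrix (ι ⊕ ι) (ι ⊕ ι) K, (∀ x ∈ S, x ᵥ* P = x) ∧
      Pᵀ * stdJ K ι * P = 0 ∧ P * stdJ K ι * Pᵀ = 0 := by
  obtain ⟨r, U, hU, rfl⟩ := S.exists_injective_mulVec_range_eq
  have hUU : Uᵀ * stdJ K ι * U = 0 := by
    ext i j
    rw [← transpose_transpose U, mul_mul_transpose_apply, transpose_transpose]
    exact hS _ ⟨Pi.single i 1, mulVec_single_one U i⟩ _ ⟨Pi.single j 1, mulVec_single_one U j⟩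
  obtain ⟨W, hUW, hWW⟩ := exists_isotropic_dual hU hUU
  refine ⟨W * Uᵀ, ?_, ?_, ?_⟩
  · rintro _ ⟨c, rfl⟩
    simp only [mulVecLin_apply, ← vecMul_transpose, vecMul_vecMul, ← Matrix.mul_assoc, hUW,
      Matrix.one_mul]
  · rw [transpose_mul, transpose_transpose, show U * Wᵀ * stdJ K ι * (W * Uᵀ) =
      U * (Wᵀ * stdJ K ι * W) * Uᵀ by simp only [Matrix.mul_assoc], hWW]
    simp
  · rw [transpose_mul, transpose_transpose, show W * Uᵀ * stdJ K ι * (U * Wᵀ) =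
      W * (Uᵀ * stdJ K ι * U) * Wᵀ by simp only [Matrix.mul_assoc], hUU]
    simp

/-- The upper right block `J Pᵀ J` is the back-action on the input forced by symplecticity. -/
def copyMatrix (P : Matrix (ι ⊕ ι) (ι ⊕ ι) K) :
    Matrix ((ι ⊕ ι) ⊕ (ι ⊕ ι)) ((ι ⊕ ι) ⊕ (ι ⊕ ι)) K :=
  fromBlocks 1 (stdJ K ι * Pᵀ * stdJ K ι) P 1

theorem copyMatrix_symplectic {P : Matrix (ι ⊕ ι) (ι ⊕ ι) K}
    (hPtP : Pᵀ * stdJ K ι * P = 0) (hPPt : P * stdJ K ι * Pᵀ = 0) :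
    (copyMatrix P)ᵀ * fromBlocks (stdJ K ι) 0 0 (stdJ K ι) * copyMatrix P =
      fromBlocks (stdJ K ι) 0 0 (stdJ K ι) := by
  have hPPt' (N : Matrix (ι ⊕ ι) (ι ⊕ ι) K) : P * (stdJ K ι * (Pᵀ * N)) = 0 := by
    rw [← Matrix.mul_assoc, ← Matrix.mul_assoc, hPPt, Matrix.zero_mul]
  rw [Matrix.mul_assoc] at hPtP
  simp only [copyMatrix, fromBlocks_transpose, fromBlocks_multiply, transpose_one,
    transpose_mul, transpose_transpose, stdJ_transpose, Matrix.mul_assoc, Matrix.neg_mul,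
    Matrix.mul_neg, neg_neg, stdJ_mul_stdJ_mul, stdJ_mul_stdJ, hPtP, hPPt', Matrix.one_mul,
    Matrix.mul_one, Matrix.mul_zero, add_zero, zero_add, neg_zero, neg_add_cancel]

lemma mul_stdJ_mul_transpose_eq_zero {κ : Type*} {Z : Matrix κ (ι ⊕ ι) K}
    {P : Matrix (ι ⊕ ι) (ι ⊕ ι) K} (hZP : Z * P = Z) (hPPt : P * stdJ K ι * Pᵀ = 0) :
    Z * stdJ K ι * Pᵀ = 0 := by
  rw [← hZP, Matrix.mul_assoc Z P, Matrix.mul_assoc Z, hPPt, Matrix.mul_zero]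

end Symplectic

theorem poisson_variable_is_copyable_general {K : Type*} [Field K] {n : ℕ}
    {κ : Type*}
    (Z : Matrix κ (Fin n ⊕ Fin n) K)
    (hZ : Z * stdJ K (Fin n) * Zᵀ = 0) :
    ∃ G : Matrix ((Fin n ⊕ Fin n) ⊕ (Fin n ⊕ Fin n))
        ((Fin n ⊕ Fin n) ⊕ (Fin n ⊕ Fin n)) K,
      Gᵀ * Matrix.fromBlocks (stdJ K (Fin n)) 0 0 (stdJ K (Fin n)) * G =
          Matrix.fromBlocks (stdJ K (Fin n)) 0 0 (stdJ K (Fin n)) ∧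
      ∃ (U : Submodule K ((Fin n ⊕ Fin n) → K)) (a : (Fin n ⊕ Fin n) → K),
        (∀ x ∈ U, ∀ y ∈ U, x ⬝ᵥ (stdJ K (Fin n)).mulVec y = 0) ∧
        ∀ (v x : (Fin n ⊕ Fin n) → K), (∀ u ∈ U, u ⬝ᵥ x = u ⬝ᵥ a) →
          Z.mulVec ((G.mulVec (Sum.elim v x)) ∘ Sum.inl) = Z.mulVec v ∧
          Z.mulVec ((G.mulVec (Sum.elim v x)) ∘ Sum.inr) = Z.mulVec v := by
  have hS := isIsotropic_span_range hZ
  obtain ⟨P, hP, hPtP, hPPt⟩ := exists_isotropic_projection hS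
  have hZP : Z * P = Z := Matrix.ext fun i j =>
    congrFun (hP (Z i) (Submodule.subset_span ⟨i, rfl⟩)) j
  have hZB : Z * (stdJ K (Fin n) * Pᵀ * stdJ K (Fin n)) = 0 := by
    rw [← Matrix.mul_assoc, ← Matrix.mul_assoc, mul_stdJ_mul_transpose_eq_zero hZP hPPt,
      Matrix.zero_mul]
  refine ⟨copyMatrix P, copyMatrix_symplectic hPtP hPPt, _, 0, hS, fun v x hx => ?_⟩
  have hZx : Z *ᵥ x = 0 := funext fun i => by
    simpa [mulVec] using hx (Z i) (Submodule.subset_span ⟨i, rfl⟩)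
  simp [copyMatrix, fromBlocks_mulVec, mulVec_add, mulVec_mulVec, hZB, hZP, hZx]

/-- Every Poisson variable `Z` (linear with `Z Ω Zᵀ = 0`) is copyable: there is a
symplectic linear map `g` on `V ⊕ V` and the support of an epistemic state `(U, a)`
of `V` such that both output components of `g` applied to `v` plus any ancilla ready
state carry the value `Z v`. -/
theorem poisson_variable_is_copyable {K : Type*} [Field K] {n : ℕ}
    {κ : Type*} [Fintype κ] [DecidableEq κ]
    (Z : Matrix κ (Fin n ⊕ Fin n) K)
    (hZ : Z * stdJ K (Fin n) * Zᵀ = 0) :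
    ∃ G : Matrix ((Fin n ⊕ Fin n) ⊕ (Fin n ⊕ Fin n))
        ((Fin n ⊕ Fin n) ⊕ (Fin n ⊕ Fin n)) K,
      Gᵀ * Matrix.fromBlocks (stdJ K (Fin n)) 0 0 (stdJ K (Fin n)) * G =
          Matrix.fromBlocks (stdJ K (Fin n)) 0 0 (stdJ K (Fin n)) ∧
      ∃ (U : Submodule K ((Fin n ⊕ Fin n) → K)) (a : (Fin n ⊕ Fin n) → K),
        (∀ x ∈ U, ∀ y ∈ U, x ⬝ᵥ (stdJ K (Fin n)).mulVec y = 0) ∧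
        ∀ (v x : (Fin n ⊕ Fin n) → K), (∀ u ∈ U, u ⬝ᵥ x = u ⬝ᵥ a) →
          Z.mulVec ((G.mulVec (Sum.elim v x)) ∘ Sum.inl) = Z.mulVec v ∧
          Z.mulVec ((G.mulVec (Sum.elim v x)) ∘ Sum.inr) = Z.mulVec v :=
  poisson_variable_is_copyable_general Z hZ
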